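/- There exists a universal constant c > 0 such that for every smooth compactly supported Φ : ℝ² → ℂ and every smooth A₁, A₂ : ℝ² → ℝ, writing D_jΦ = ∂_jΦ − iA_jΦ, |∇_AΦ|² = |D₁Φ|² + |D₂Φ|² and |∇_A∇_AΦ|² = Σ_{j,k=1}^{2} |D_jD_kΦ|², one has the covariant Gagliardo–Nirenberg inequality ( ∫_{ℝ²} |∇_AΦ|⁴ )^{1/4} ≤ c ( ∫_{ℝ²} |∇_AΦ|² )^{1/4} · [ ( ∫_{ℝ²} |∇_AΦ|² )^{1/4} + ( ∫_{ℝ²} |∇_A∇_AΦ|² )^{1/4} ]. -/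

import Mathlib

open MeasureTheory
open scoped ENNReal NNReal

/-- Partial derivative in `x¹` for a function on `ℝ²`. -/
noncomputable def pd1 {F : Type*} [NormedAddCommGroup F] [NormedSpace ℝ F]
    (f : ℝ × ℝ → F) (p : ℝ × ℝ) : F :=
  deriv (fun s => f (s, p.2)) p.1

/-- Partial derivative in `x²` for a function on `ℝ²`. -/
noncomputable def pd2 {F : Type*} [NormedAddCommGroup F] [NormedSpace ℝ F]
    (f : ℝ × ℝ → F) (p : ℝ × ℝ) : F :=
  deriv (fun s => f (p.1, s)) p.2

/-- The covariant derivative `D₁Φ = ∂₁Φ − iA₁Φ` on `ℝ²`. -/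
noncomputable def covD1 (A1 : ℝ × ℝ → ℝ) (Φ : ℝ × ℝ → ℂ) : ℝ × ℝ → ℂ :=
  fun q => pd1 Φ q - Complex.I * (A1 q : ℂ) * Φ q

/-- The covariant derivative `D₂Φ = ∂₂Φ − iA₂Φ` on `ℝ²`. -/
noncomputable def covD2 (A2 : ℝ × ℝ → ℝ) (Φ : ℝ × ℝ → ℂ) : ℝ × ℝ → ℂ :=
  fun q => pd2 Φ q - Complex.I * (A2 q : ℂ) * Φ q

/-- `|∇_AΦ|² = |D₁Φ|² + |D₂Φ|²`. -/
noncomputable def gradAsq (A1 A2 : ℝ × ℝ → ℝ) (Φ : ℝ × ℝ → ℂ) (p : ℝ × ℝ) : ℝ :=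
  ‖(covD1 A1 Φ p)‖ ^ 2 + ‖(covD2 A2 Φ p)‖ ^ 2

/-- `|∇_A∇_AΦ|² = Σ_{j,k} |D_jD_kΦ|²`. -/
noncomputable def grad2Asq (A1 A2 : ℝ × ℝ → ℝ) (Φ : ℝ × ℝ → ℂ) (p : ℝ × ℝ) : ℝ :=
  ‖(covD1 A1 (covD1 A1 Φ) p)‖ ^ 2
    + ‖(covD1 A1 (covD2 A2 Φ) p)‖ ^ 2
    + ‖(covD2 A2 (covD1 A1 Φ) p)‖ ^ 2
    + ‖(covD2 A2 (covD2 A2 Φ) p)‖ ^ 2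

section Aux

lemma pd1_eq_fderiv {F : Type*} [NormedAddCommGroup F] [NormedSpace ℝ F]
    {f : ℝ × ℝ → F} (hf : Differentiable ℝ f) (p : ℝ × ℝ) :
    pd1 f p = fderiv ℝ f p (1, 0) := by
  have h1 : HasDerivAt (fun s : ℝ => ((s, p.2) : ℝ × ℝ)) (1, 0) p.1 :=
    (hasDerivAt_id p.1).prodMk (hasDerivAt_const _ _)
  have := (hf p).hasFDerivAt.comp_hasDerivAt p.1 h1
  simpa [pd1, Function.comp_def] using this.deriv

lemma pd2_eq_fderiv {F : Type*} [NormedAddCommGroup F] [NormedSpace ℝ F]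
    {f : ℝ × ℝ → F} (hf : Differentiable ℝ f) (p : ℝ × ℝ) :
    pd2 f p = fderiv ℝ f p (0, 1) := by
  have h1 : HasDerivAt (fun s : ℝ => ((p.1, s) : ℝ × ℝ)) (0, 1) p.2 :=
    (hasDerivAt_const _ _).prodMk (hasDerivAt_id p.2)
  have := (hf p).hasFDerivAt.comp_hasDerivAt p.2 h1
  simpa [pd2, Function.comp_def] using this.deriv

lemma pd1_contDiff {F : Type*} [NormedAddCommGroup F] [NormedSpace ℝ F]
    {f : ℝ × ℝ → F} (hf : ContDiff ℝ (⊤ : ℕ∞) f) : ContDiff ℝ (⊤ : ℕ∞) (pd1 f) := by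
  have h : ContDiff ℝ (⊤ : ℕ∞) (fun p : ℝ × ℝ => fderiv ℝ f p (1, 0)) :=
    (hf.fderiv_right (by simp)).clm_apply contDiff_const
  have heq : pd1 f = fun p : ℝ × ℝ => fderiv ℝ f p (1, 0) :=
    funext fun p => pd1_eq_fderiv (hf.differentiable (by simp)) p
  rw [heq]; exact h

lemma pd2_contDiff {F : Type*} [NormedAddCommGroup F] [NormedSpace ℝ F]
    {f : ℝ × ℝ → F} (hf : ContDiff ℝ (⊤ : ℕ∞) f) : ContDiff ℝ (⊤ : ℕ∞) (pd2 f) := by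
  have h : ContDiff ℝ (⊤ : ℕ∞) (fun p : ℝ × ℝ => fderiv ℝ f p (0, 1)) :=
    (hf.fderiv_right (by simp)).clm_apply contDiff_const
  have heq : pd2 f = fun p : ℝ × ℝ => fderiv ℝ f p (0, 1) :=
    funext fun p => pd2_eq_fderiv (hf.differentiable (by simp)) p
  rw [heq]; exact h

lemma pd1_supp {F : Type*} [NormedAddCommGroup F] [NormedSpace ℝ F]
    {f : ℝ × ℝ → F} (hf : ContDiff ℝ (⊤ : ℕ∞) f) (hs : HasCompactSupport f) :
    HasCompactSupport (pd1 f) := by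
  have heq : pd1 f = fun p : ℝ × ℝ => fderiv ℝ f p (1, 0) :=
    funext fun p => pd1_eq_fderiv (hf.differentiable (by simp)) p
  rw [heq]
  exact (hs.fderiv ℝ).comp_left (g := fun L : (ℝ × ℝ) →L[ℝ] F => L (1, 0)) (by simp)

lemma pd2_supp {F : Type*} [NormedAddCommGroup F] [NormedSpace ℝ F]
    {f : ℝ × ℝ → F} (hf : ContDiff ℝ (⊤ : ℕ∞) f) (hs : HasCompactSupport f) :
    HasCompactSupport (pd2 f) := by
  have heq : pd2 f = fun p : ℝ × ℝ => fderiv ℝ f p (0, 1) :=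
    funext fun p => pd2_eq_fderiv (hf.differentiable (by simp)) p
  rw [heq]
  exact (hs.fderiv ℝ).comp_left (g := fun L : (ℝ × ℝ) →L[ℝ] F => L (0, 1)) (by simp)

lemma covD1_contDiff {A1 : ℝ × ℝ → ℝ} {Φ : ℝ × ℝ → ℂ}
    (hA : ContDiff ℝ (⊤ : ℕ∞) A1) (hΦ : ContDiff ℝ (⊤ : ℕ∞) Φ) : ContDiff ℝ (⊤ : ℕ∞) (covD1 A1 Φ) := by
  unfold covD1
  exact (pd1_contDiff hΦ).sub
    ((contDiff_const.mul (Complex.ofRealCLM.contDiff.comp hA)).mul hΦ)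

lemma covD2_contDiff {A2 : ℝ × ℝ → ℝ} {Φ : ℝ × ℝ → ℂ}
    (hA : ContDiff ℝ (⊤ : ℕ∞) A2) (hΦ : ContDiff ℝ (⊤ : ℕ∞) Φ) : ContDiff ℝ (⊤ : ℕ∞) (covD2 A2 Φ) := by
  unfold covD2
  exact (pd2_contDiff hΦ).sub
    ((contDiff_const.mul (Complex.ofRealCLM.contDiff.comp hA)).mul hΦ)

lemma covD1_supp {A1 : ℝ × ℝ → ℝ} {Φ : ℝ × ℝ → ℂ}
    (hΦ : ContDiff ℝ (⊤ : ℕ∞) Φ) (hs : HasCompactSupport Φ) :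
    HasCompactSupport (covD1 A1 Φ) := by
  refine HasCompactSupport.mono' hs ?_
  intro q hq
  by_contra h
  apply hq
  have hΦ0 : Φ q = 0 := image_eq_zero_of_notMem_tsupport h
  have hfd : fderiv ℝ Φ q = 0 := by
    by_contra hc
    exact h (support_fderiv_subset ℝ (Function.mem_support.mpr hc))
  simp [covD1, pd1_eq_fderiv (hΦ.differentiable (by simp)) q, hfd, hΦ0]

lemma covD2_supp {A2 : ℝ × ℝ → ℝ} {Φ : ℝ × ℝ → ℂ}
    (hΦ : ContDiff ℝ (⊤ : ℕ∞) Φ) (hs : HasCompactSupport Φ) :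
    HasCompactSupport (covD2 A2 Φ) := by
  refine HasCompactSupport.mono' hs ?_
  intro q hq
  by_contra h
  apply hq
  have hΦ0 : Φ q = 0 := image_eq_zero_of_notMem_tsupport h
  have hfd : fderiv ℝ Φ q = 0 := by
    by_contra hc
    exact h (support_fderiv_subset ℝ (Function.mem_support.mpr hc))
  simp [covD2, pd2_eq_fderiv (hΦ.differentiable (by simp)) q, hfd, hΦ0]

lemma covD1_continuous {A1 : ℝ × ℝ → ℝ} {Φ : ℝ × ℝ → ℂ}
    (hA : Continuous A1) (hΦ : ContDiff ℝ (⊤ : ℕ∞) Φ) : Continuous (covD1 A1 Φ) := by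
  unfold covD1
  exact ((pd1_contDiff hΦ).continuous).sub
    ((continuous_const.mul (Complex.continuous_ofReal.comp hA)).mul hΦ.continuous)

lemma covD2_continuous {A2 : ℝ × ℝ → ℝ} {Φ : ℝ × ℝ → ℂ}
    (hA : Continuous A2) (hΦ : ContDiff ℝ (⊤ : ℕ∞) Φ) : Continuous (covD2 A2 Φ) := by
  unfold covD2
  exact ((pd2_contDiff hΦ).continuous).sub
    ((continuous_const.mul (Complex.continuous_ofReal.comp hA)).mul hΦ.continuous)

lemma pd1_normSq {f : ℝ × ℝ → ℂ} (hf : ContDiff ℝ (⊤ : ℕ∞) f) (p : ℝ × ℝ) :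
    pd1 (fun q => Complex.normSq (f q)) p
      = 2 * ((pd1 f p) * (starRingEnd ℂ) (f p)).re := by
  have h1 : HasDerivAt (fun s : ℝ => ((s, p.2) : ℝ × ℝ)) (1, 0) p.1 :=
    (hasDerivAt_id p.1).prodMk (hasDerivAt_const _ _)
  have hdiff : DifferentiableAt ℝ (fun s : ℝ => f (s, p.2)) p.1 :=
    ((hf.differentiable (by simp) (p.1, p.2)).hasFDerivAt.comp_hasDerivAt p.1 h1).differentiableAt
  have hF : HasDerivAt (fun s : ℝ => f (s, p.2)) (pd1 f p) p.1 := hdiff.hasDerivAt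
  have hmul : HasDerivAt (fun s : ℝ => f (s, p.2) * (starRingEnd ℂ) (f (s, p.2)))
      (pd1 f p * (starRingEnd ℂ) (f (p.1, p.2)) + f (p.1, p.2) * (starRingEnd ℂ) (pd1 f p))
      p.1 := hF.mul hF.star
  have hre : HasDerivAt (fun s : ℝ => Complex.normSq (f (s, p.2)))
      (2 * ((pd1 f p) * (starRingEnd ℂ) (f p)).re) p.1 := by
    have h2 := (Complex.reCLM.hasFDerivAt).comp_hasDerivAt p.1 hmul
    have heq : ∀ z : ℂ, Complex.reCLM (z * (starRingEnd ℂ) z) = Complex.normSq z := by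
      intro z; simp [Complex.mul_conj]
    have h3 : HasDerivAt (fun s : ℝ => Complex.reCLM (f (s, p.2) * (starRingEnd ℂ) (f (s, p.2))))
        (Complex.reCLM (pd1 f p * (starRingEnd ℂ) (f (p.1, p.2))
          + f (p.1, p.2) * (starRingEnd ℂ) (pd1 f p))) p.1 := h2
    simp only [heq] at h3
    convert h3 using 1
    simp [Complex.add_re, Complex.mul_re, Complex.conj_re, Complex.conj_im]
    ring
  exact hre.deriv

lemma pd2_normSq {f : ℝ × ℝ → ℂ} (hf : ContDiff ℝ (⊤ : ℕ∞) f) (p : ℝ × ℝ) :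
    pd2 (fun q => Complex.normSq (f q)) p
      = 2 * ((pd2 f p) * (starRingEnd ℂ) (f p)).re := by
  have h1 : HasDerivAt (fun s : ℝ => ((p.1, s) : ℝ × ℝ)) (0, 1) p.2 :=
    (hasDerivAt_const _ _).prodMk (hasDerivAt_id p.2)
  have hdiff : DifferentiableAt ℝ (fun s : ℝ => f (p.1, s)) p.2 :=
    ((hf.differentiable (by simp) (p.1, p.2)).hasFDerivAt.comp_hasDerivAt p.2 h1).differentiableAt
  have hF : HasDerivAt (fun s : ℝ => f (p.1, s)) (pd2 f p) p.2 := hdiff.hasDerivAt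
  have hmul : HasDerivAt (fun s : ℝ => f (p.1, s) * (starRingEnd ℂ) (f (p.1, s)))
      (pd2 f p * (starRingEnd ℂ) (f (p.1, p.2)) + f (p.1, p.2) * (starRingEnd ℂ) (pd2 f p))
      p.2 := hF.mul hF.star
  have hre : HasDerivAt (fun s : ℝ => Complex.normSq (f (p.1, s)))
      (2 * ((pd2 f p) * (starRingEnd ℂ) (f p)).re) p.2 := by
    have h2 := (Complex.reCLM.hasFDerivAt).comp_hasDerivAt p.2 hmul
    have heq : ∀ z : ℂ, Complex.reCLM (z * (starRingEnd ℂ) z) = Complex.normSq z := by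
      intro z; simp [Complex.mul_conj]
    have h3 : HasDerivAt (fun s : ℝ => Complex.reCLM (f (p.1, s) * (starRingEnd ℂ) (f (p.1, s))))
        (Complex.reCLM (pd2 f p * (starRingEnd ℂ) (f (p.1, p.2))
          + f (p.1, p.2) * (starRingEnd ℂ) (pd2 f p))) p.2 := h2
    simp only [heq] at h3
    convert h3 using 1
    simp [Complex.add_re, Complex.mul_re, Complex.conj_re, Complex.conj_im]
    ring
  exact hre.deriv

lemma opnorm_le_R2 (L : ℝ × ℝ →L[ℝ] ℝ) : ‖L‖ ≤ ‖L (1, 0)‖ + ‖L (0, 1)‖ := by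
  refine L.opNorm_le_bound (by positivity) fun w => ?_
  have hw : w = w.1 • ((1 : ℝ), (0 : ℝ)) + w.2 • ((0 : ℝ), (1 : ℝ)) := by ext <;> simp
  calc ‖L w‖ = ‖w.1 • L (1, 0) + w.2 • L (0, 1)‖ := by
        conv_lhs => rw [hw]
        rw [map_add, _root_.map_smul, _root_.map_smul]
    _ ≤ ‖w.1 • L (1, 0)‖ + ‖w.2 • L (0, 1)‖ := norm_add_le _ _
    _ = |w.1| * ‖L (1, 0)‖ + |w.2| * ‖L (0, 1)‖ := by simp [norm_smul]
    _ ≤ ‖w‖ * ‖L (1, 0)‖ + ‖w‖ * ‖L (0, 1)‖ := by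
        gcongr
        · exact norm_fst_le w
        · exact norm_snd_le w
    _ = (‖L (1, 0)‖ + ‖L (0, 1)‖) * ‖w‖ := by ring

lemma re_mul_conj_covD1 (a1 : ℝ × ℝ → ℝ) {f : ℝ × ℝ → ℂ} (p : ℝ × ℝ) :
    ((pd1 f p) * (starRingEnd ℂ) (f p)).re = ((covD1 a1 f p) * (starRingEnd ℂ) (f p)).re := by
  have h : pd1 f p = covD1 a1 f p + Complex.I * (a1 p : ℂ) * f p := by
    simp [covD1]
  rw [h, add_mul, Complex.add_re]
  have : (Complex.I * (a1 p : ℂ) * f p * (starRingEnd ℂ) (f p)).re = 0 := by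
    rw [mul_assoc, Complex.mul_conj]
    simp [Complex.mul_re]
  rw [this, add_zero]

lemma re_mul_conj_covD2 (a2 : ℝ × ℝ → ℝ) {f : ℝ × ℝ → ℂ} (p : ℝ × ℝ) :
    ((pd2 f p) * (starRingEnd ℂ) (f p)).re = ((covD2 a2 f p) * (starRingEnd ℂ) (f p)).re := by
  have h : pd2 f p = covD2 a2 f p + Complex.I * (a2 p : ℂ) * f p := by
    simp [covD2]
  rw [h, add_mul, Complex.add_re]
  have : (Complex.I * (a2 p : ℂ) * f p * (starRingEnd ℂ) (f p)).re = 0 := by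
    rw [mul_assoc, Complex.mul_conj]
    simp [Complex.mul_re]
  rw [this, add_zero]

lemma contDiff_normSq_comp {f : ℝ × ℝ → ℂ} (hf : ContDiff ℝ (⊤ : ℕ∞) f) :
    ContDiff ℝ (⊤ : ℕ∞) (fun q => Complex.normSq (f q)) := by
  have h : (fun q => Complex.normSq (f q))
      = fun q => (Complex.reCLM (f q)) ^ 2 + (Complex.imCLM (f q)) ^ 2 := by
    funext q; simp [Complex.normSq_apply]; ring
  rw [h]
  exact ((Complex.reCLM.contDiff.comp hf).pow 2).add ((Complex.imCLM.contDiff.comp hf).pow 2)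

lemma fderiv_normSq_bound (a1 a2 : ℝ × ℝ → ℝ) {f : ℝ × ℝ → ℂ}
    (hf : ContDiff ℝ (⊤ : ℕ∞) f) (p : ℝ × ℝ) :
    ‖fderiv ℝ (fun q => Complex.normSq (f q)) p‖
      ≤ ‖f p‖ *
        (2 * (‖covD1 a1 f p‖ + ‖covD2 a2 f p‖)) := by
  have hv : ContDiff ℝ (⊤ : ℕ∞) (fun q => Complex.normSq (f q)) := contDiff_normSq_comp hf
  set L := fderiv ℝ (fun q => Complex.normSq (f q)) p with hL
  have h1 : L (1, 0) = 2 * ((covD1 a1 f p) * (starRingEnd ℂ) (f p)).re := by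
    rw [hL, ← pd1_eq_fderiv (hv.differentiable (by simp)) p, pd1_normSq hf p,
      re_mul_conj_covD1 a1 p]
  have h2 : L (0, 1) = 2 * ((covD2 a2 f p) * (starRingEnd ℂ) (f p)).re := by
    rw [hL, ← pd2_eq_fderiv (hv.differentiable (by simp)) p, pd2_normSq hf p,
      re_mul_conj_covD2 a2 p]
  have hb1 : ‖L (1, 0)‖ ≤ 2 * (‖covD1 a1 f p‖ * ‖f p‖) := by
    have hre := Complex.abs_re_le_norm ((covD1 a1 f p) * (starRingEnd ℂ) (f p))
    rw [norm_mul, Complex.norm_conj] at hre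
    rw [h1, Real.norm_eq_abs, abs_mul, abs_two]
    linarith
  have hb2 : ‖L (0, 1)‖ ≤ 2 * (‖covD2 a2 f p‖ * ‖f p‖) := by
    have hre := Complex.abs_re_le_norm ((covD2 a2 f p) * (starRingEnd ℂ) (f p))
    rw [norm_mul, Complex.norm_conj] at hre
    rw [h2, Real.norm_eq_abs, abs_mul, abs_two]
    linarith
  have h0 := opnorm_le_R2 L
  nlinarith [hb1, hb2, h0]

end Aux


lemma lady (f : ℝ × ℝ → ℂ) (a1 a2 : ℝ × ℝ → ℝ) (hf : ContDiff ℝ (⊤ : ℕ∞) f)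
    (hfs : HasCompactSupport f) (ha1 : Continuous a1) (ha2 : Continuous a2) :
    ∫⁻ p, ENNReal.ofReal (‖f p‖ ^ 2 * ‖f p‖ ^ 2)
      ≤ 8 * (eLpNormLESNormFDerivOneConst (volume : Measure (ℝ × ℝ)) 2 : ℝ≥0∞) ^ 2
        * (∫⁻ p, ENNReal.ofReal (‖f p‖ ^ 2))
        * (∫⁻ p, ENNReal.ofReal
            (‖covD1 a1 f p‖ ^ 2 + ‖covD2 a2 f p‖ ^ 2)) := by
  set C : ℝ≥0 := eLpNormLESNormFDerivOneConst (volume : Measure (ℝ × ℝ)) 2 with hCdef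
  set v : ℝ × ℝ → ℝ := fun q => Complex.normSq (f q) with hvdef
  set Z : ℝ≥0∞ := ∫⁻ p, ENNReal.ofReal (‖f p‖ ^ 2 * ‖f p‖ ^ 2)
    with hZdef
  set X : ℝ≥0∞ := ∫⁻ p, ENNReal.ofReal (‖f p‖ ^ 2) with hXdef
  set Y : ℝ≥0∞ := ∫⁻ p, ENNReal.ofReal
    (‖covD1 a1 f p‖ ^ 2 + ‖covD2 a2 f p‖ ^ 2) with hYdef
  have hv : ContDiff ℝ (⊤ : ℕ∞) v := contDiff_normSq_comp hf
  have hvs : HasCompactSupport v :=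
    hfs.comp_left (g := Complex.normSq) (by simp)
  -- Sobolev inequality
  have hp : NNReal.HolderConjugate (Module.finrank ℝ (ℝ × ℝ)) 2 := by
    have hfr : Module.finrank ℝ (ℝ × ℝ) = 2 := by simp
    rw [hfr]
    refine NNReal.holderConjugate_iff.mpr ⟨?_, ?_⟩
    · norm_num
    · rw [show ((2 : ℕ) : NNReal) = 2 by norm_num, ← two_mul]
      exact mul_inv_cancel₀ two_ne_zero
  have sob : eLpNorm v 2 (volume : Measure (ℝ × ℝ)) ≤
      C * eLpNorm (fderiv ℝ v) 1 volume :=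
    eLpNorm_le_eLpNorm_fderiv_one volume (hv.of_le (by simp)) hvs hp
  -- identify the left-hand side
  have hZpt : ∀ q : ℝ × ℝ, (‖v q‖ₑ) ^ (2 : ℝ)
      = ENNReal.ofReal (‖f q‖ ^ 2 * ‖f q‖ ^ 2) := by
    intro q
    have hv0 : 0 ≤ v q := Complex.normSq_nonneg _
    rw [Real.enorm_eq_ofReal hv0, ENNReal.ofReal_rpow_of_nonneg hv0 (by norm_num : (0:ℝ) ≤ 2)]
    congr 1
    rw [show (2 : ℝ) = ((2 : ℕ) : ℝ) by norm_num, Real.rpow_natCast]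
    have : v q = ‖f q‖ ^ 2 := (Complex.sq_norm (f q)).symm
    rw [this]; ring
  have hA : eLpNorm v 2 (volume : Measure (ℝ × ℝ)) = Z ^ ((1 : ℝ) / 2) := by
    rw [eLpNorm_eq_lintegral_rpow_enorm_toReal two_ne_zero ENNReal.ofNat_ne_top]
    have ht : ((2 : ℝ≥0∞).toReal) = (2 : ℝ) := by simp
    rw [ht]
    congr 1
    exact lintegral_congr hZpt
  -- continuity facts
  have hg1c : Continuous (covD1 a1 f) := covD1_continuous ha1 hf
  have hg2c : Continuous (covD2 a2 f) := covD2_continuous ha2 hf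
  -- bound the right-hand side
  set φ : ℝ × ℝ → ℝ≥0∞ := fun p => ENNReal.ofReal (‖f p‖) with hφdef
  set ψ : ℝ × ℝ → ℝ≥0∞ := fun p => ENNReal.ofReal
    (2 * (‖covD1 a1 f p‖ + ‖covD2 a2 f p‖)) with hψdef
  have hφm : AEMeasurable φ volume :=
    (ENNReal.continuous_ofReal.comp (continuous_norm.comp hf.continuous)).aemeasurable
  have hψm : AEMeasurable ψ volume := by
    apply Continuous.aemeasurable
    exact ENNReal.continuous_ofReal.comp
      ((continuous_const.mul ((continuous_norm.comp hg1c).add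
        (continuous_norm.comp hg2c))))
  have hB1 : eLpNorm (fderiv ℝ v) 1 (volume : Measure (ℝ × ℝ)) ≤ ∫⁻ p, φ p * ψ p := by
    rw [eLpNorm_one_eq_lintegral_enorm]
    apply lintegral_mono
    intro p
    rw [hφdef, hψdef]
    simp only []
    rw [← ENNReal.ofReal_mul (norm_nonneg _), ← ofReal_norm]
    exact ENNReal.ofReal_le_ofReal (fderiv_normSq_bound a1 a2 hf p)
  have hHolder : ∫⁻ p, φ p * ψ p ≤
      (∫⁻ p, (φ p) ^ (2 : ℝ)) ^ ((1 : ℝ) / 2) * (∫⁻ p, (ψ p) ^ (2 : ℝ)) ^ ((1 : ℝ) / 2) :=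
    ENNReal.lintegral_mul_le_Lp_mul_Lq volume (Real.holderConjugate_iff.mpr ⟨one_lt_two, by norm_num⟩) hφm hψm
  have hφ2 : ∫⁻ p, (φ p) ^ (2 : ℝ) = X := by
    apply lintegral_congr
    intro q
    rw [hφdef]
    simp only []
    rw [ENNReal.ofReal_rpow_of_nonneg (norm_nonneg _) (by norm_num : (0:ℝ) ≤ 2)]
    congr 1
    rw [show (2 : ℝ) = ((2 : ℕ) : ℝ) by norm_num, Real.rpow_natCast]
  have hψ2 : ∫⁻ p, (ψ p) ^ (2 : ℝ) ≤ 8 * Y := by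
    have hpt : ∀ q : ℝ × ℝ, (ψ q) ^ (2 : ℝ) ≤ 8 * ENNReal.ofReal
        (‖covD1 a1 f q‖ ^ 2 + ‖covD2 a2 f q‖ ^ 2) := by
      intro q
      rw [hψdef]
      simp only []
      have habnn : 0 ≤ 2 * (‖covD1 a1 f q‖ + ‖covD2 a2 f q‖) := by
        positivity
      rw [ENNReal.ofReal_rpow_of_nonneg habnn (by norm_num : (0:ℝ) ≤ 2),
        show (8 : ℝ≥0∞) = ENNReal.ofReal (8 : ℝ) by norm_num,
        ← ENNReal.ofReal_mul (by norm_num)]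
      apply ENNReal.ofReal_le_ofReal
      rw [show (2 : ℝ) = ((2 : ℕ) : ℝ) by norm_num, Real.rpow_natCast]
      push_cast
      nlinarith [norm_nonneg (covD1 a1 f q), norm_nonneg (covD2 a2 f q),
        sq_nonneg (‖covD1 a1 f q‖ - ‖covD2 a2 f q‖)]
    calc ∫⁻ p, (ψ p) ^ (2 : ℝ)
        ≤ ∫⁻ p, 8 * ENNReal.ofReal
            (‖covD1 a1 f p‖ ^ 2 + ‖covD2 a2 f p‖ ^ 2) :=
          lintegral_mono hpt
      _ = 8 * Y := by
          rw [hYdef]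
          exact lintegral_const_mul 8 (ENNReal.measurable_ofReal.comp
            (((continuous_norm.comp hg1c).pow 2).add
              ((continuous_norm.comp hg2c).pow 2)).measurable)
  -- combine
  have hkey : Z ^ ((1 : ℝ) / 2) ≤ (C : ℝ≥0∞) * (X ^ ((1 : ℝ) / 2) * (8 * Y) ^ ((1 : ℝ) / 2)) := by
    calc Z ^ ((1 : ℝ) / 2) = eLpNorm v 2 (volume : Measure (ℝ × ℝ)) := hA.symm
      _ ≤ C * eLpNorm (fderiv ℝ v) 1 volume := sob
      _ ≤ C * (∫⁻ p, φ p * ψ p) := by gcongr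
      _ ≤ C * ((∫⁻ p, (φ p) ^ (2 : ℝ)) ^ ((1 : ℝ) / 2) * (∫⁻ p, (ψ p) ^ (2 : ℝ)) ^ ((1 : ℝ) / 2)) := by
          gcongr
      _ ≤ C * (X ^ ((1 : ℝ) / 2) * (8 * Y) ^ ((1 : ℝ) / 2)) := by
          rw [hφ2]
          gcongr
  have hsq := ENNReal.rpow_le_rpow hkey (by norm_num : (0 : ℝ) ≤ 2)
  have hZsq : (Z ^ ((1 : ℝ) / 2)) ^ (2 : ℝ) = Z := by
    rw [← ENNReal.rpow_mul]
    norm_num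
  have hRsq : ((C : ℝ≥0∞) * (X ^ ((1 : ℝ) / 2) * (8 * Y) ^ ((1 : ℝ) / 2))) ^ (2 : ℝ)
      = (C : ℝ≥0∞) ^ (2 : ℝ) * (X * (8 * Y)) := by
    rw [ENNReal.mul_rpow_of_nonneg _ _ (by norm_num : (0 : ℝ) ≤ 2),
      ENNReal.mul_rpow_of_nonneg _ _ (by norm_num : (0 : ℝ) ≤ 2),
      ← ENNReal.rpow_mul, ← ENNReal.rpow_mul]
    norm_num
  rw [hZsq, hRsq] at hsq
  calc Z ≤ (C : ℝ≥0∞) ^ (2 : ℝ) * (X * (8 * Y)) := hsq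
    _ = 8 * (C : ℝ≥0∞) ^ 2 * X * Y := by
        rw [show ((2 : ℝ)) = ((2 : ℕ) : ℝ) by norm_num, ENNReal.rpow_natCast]
        ring

/-- The covariant Gagliardo–Nirenberg inequality on flat `ℝ²`:
`‖∇_AΦ‖_{L⁴} ≤ c ‖∇_AΦ‖_{L²}^{1/2} (‖∇_AΦ‖_{L²}^{1/2} + ‖∇_A∇_AΦ‖_{L²}^{1/2})`
with a universal constant `c`, for smooth compactly supported `Φ` and smooth `A`. -/
theorem covariant_gagliardo_nirenberg :
    ∃ c : ℝ, 0 < c ∧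
      ∀ (Φ : ℝ × ℝ → ℂ) (A1 A2 : ℝ × ℝ → ℝ),
        ContDiff ℝ (⊤ : ℕ∞) Φ → HasCompactSupport Φ →
        ContDiff ℝ (⊤ : ℕ∞) A1 → ContDiff ℝ (⊤ : ℕ∞) A2 →
        (∫ p : ℝ × ℝ, (gradAsq A1 A2 Φ p) ^ 2) ^ ((1 : ℝ) / 4)
          ≤ c * (∫ p : ℝ × ℝ, gradAsq A1 A2 Φ p) ^ ((1 : ℝ) / 4) *
            ((∫ p : ℝ × ℝ, gradAsq A1 A2 Φ p) ^ ((1 : ℝ) / 4)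
              + (∫ p : ℝ × ℝ, grad2Asq A1 A2 Φ p) ^ ((1 : ℝ) / 4)) := by
  set C : ℝ≥0 := eLpNormLESNormFDerivOneConst (volume : Measure (ℝ × ℝ)) 2 with hCdef
  set K : ℝ≥0∞ := 32 * (C : ℝ≥0∞) ^ 2 with hKdef
  have hKne : K ≠ ⊤ := by
    rw [hKdef]
    exact ENNReal.mul_ne_top (by simp) (ENNReal.pow_ne_top ENNReal.coe_ne_top)
  refine ⟨(K.toReal + 1) ^ ((1 : ℝ) / 4),
    Real.rpow_pos_of_pos (by positivity) _, ?_⟩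
  intro Φ A1 A2 hΦ hΦs hA1 hA2
  set f1 : ℝ × ℝ → ℂ := covD1 A1 Φ with hf1def
  set f2 : ℝ × ℝ → ℂ := covD2 A2 Φ with hf2def
  have hf1 : ContDiff ℝ (⊤ : ℕ∞) f1 := covD1_contDiff hA1 hΦ
  have hf2 : ContDiff ℝ (⊤ : ℕ∞) f2 := covD2_contDiff hA2 hΦ
  have hf1s : HasCompactSupport f1 := covD1_supp hΦ hΦs
  have hf2s : HasCompactSupport f2 := covD2_supp hΦ hΦs
  have hf1c : Continuous f1 := hf1.continuous
  have hf2c : Continuous f2 := hf2.continuous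
  -- continuity and support of gradAsq, grad2Asq
  have hg : Continuous (gradAsq A1 A2 Φ) := by
    unfold gradAsq
    exact ((continuous_norm.comp hf1c).pow 2).add ((continuous_norm.comp hf2c).pow 2)
  have hgs : HasCompactSupport (gradAsq A1 A2 Φ) := by
    have h1 : HasCompactSupport (fun p => ‖f1 p‖ ^ 2) :=
      hf1s.comp_left (g := fun z : ℂ => ‖z‖ ^ 2) (by simp)
    have h2 : HasCompactSupport (fun p => ‖f2 p‖ ^ 2) :=
      hf2s.comp_left (g := fun z : ℂ => ‖z‖ ^ 2) (by simp)
    exact h1.add h2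
  have hg11 : Continuous (covD1 A1 f1) := covD1_continuous hA1.continuous hf1
  have hg21 : Continuous (covD2 A2 f1) := covD2_continuous hA2.continuous hf1
  have hg12 : Continuous (covD1 A1 f2) := covD1_continuous hA1.continuous hf2
  have hg22 : Continuous (covD2 A2 f2) := covD2_continuous hA2.continuous hf2
  have hh : Continuous (grad2Asq A1 A2 Φ) := by
    unfold grad2Asq
    exact ((((continuous_norm.comp hg11).pow 2).add
      ((continuous_norm.comp hg12).pow 2)).add
      ((continuous_norm.comp hg21).pow 2)).add
      ((continuous_norm.comp hg22).pow 2)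
  have hhs : HasCompactSupport (grad2Asq A1 A2 Φ) := by
    have t11 : HasCompactSupport (fun p => ‖covD1 A1 f1 p‖ ^ 2) :=
      (covD1_supp hf1 hf1s).comp_left (g := fun z : ℂ => ‖z‖ ^ 2) (by simp)
    have t12 : HasCompactSupport (fun p => ‖covD1 A1 f2 p‖ ^ 2) :=
      (covD1_supp hf2 hf2s).comp_left (g := fun z : ℂ => ‖z‖ ^ 2) (by simp)
    have t21 : HasCompactSupport (fun p => ‖covD2 A2 f1 p‖ ^ 2) :=
      (covD2_supp hf1 hf1s).comp_left (g := fun z : ℂ => ‖z‖ ^ 2) (by simp)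
    have t22 : HasCompactSupport (fun p => ‖covD2 A2 f2 p‖ ^ 2) :=
      (covD2_supp hf2 hf2s).comp_left (g := fun z : ℂ => ‖z‖ ^ 2) (by simp)
    exact ((t11.add t12).add t21).add t22
  -- nonnegativity
  have hgnn : ∀ p, 0 ≤ gradAsq A1 A2 Φ p := by
    intro p; unfold gradAsq; positivity
  have hhnn : ∀ p, 0 ≤ grad2Asq A1 A2 Φ p := by
    intro p; unfold grad2Asq; positivity
  -- lintegrals
  set lX : ℝ≥0∞ := ∫⁻ p, ENNReal.ofReal (gradAsq A1 A2 Φ p) with hlX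
  set lY : ℝ≥0∞ := ∫⁻ p, ENNReal.ofReal (grad2Asq A1 A2 Φ p) with hlY
  set lZ : ℝ≥0∞ := ∫⁻ p, ENNReal.ofReal ((gradAsq A1 A2 Φ p) ^ 2) with hlZ
  have hXeq : ∫ p, gradAsq A1 A2 Φ p = lX.toReal := by
    rw [hlX]
    exact integral_eq_lintegral_of_nonneg_ae (Filter.Eventually.of_forall hgnn)
      hg.aestronglyMeasurable
  have hYeq : ∫ p, grad2Asq A1 A2 Φ p = lY.toReal := by
    rw [hlY]
    exact integral_eq_lintegral_of_nonneg_ae (Filter.Eventually.of_forall hhnn)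
      hh.aestronglyMeasurable
  have hZeq : ∫ p, (gradAsq A1 A2 Φ p) ^ 2 = lZ.toReal := by
    rw [hlZ]
    exact integral_eq_lintegral_of_nonneg_ae
      (Filter.Eventually.of_forall fun p => sq_nonneg _) (hg.pow 2).aestronglyMeasurable
  have hXlt : lX ≠ ⊤ := by
    refine (lt_of_le_of_lt (lintegral_mono fun p => Real.ofReal_le_enorm _) ?_).ne
    exact (hg.integrable_of_hasCompactSupport hgs).2
  have hYlt : lY ≠ ⊤ := by
    refine (lt_of_le_of_lt (lintegral_mono fun p => Real.ofReal_le_enorm _) ?_).ne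
    exact (hh.integrable_of_hasCompactSupport hhs).2
  -- the per-component Ladyzhenskaya bounds
  have hl1 := lady f1 A1 A2 hf1 hf1s hA1.continuous hA2.continuous
  have hl2 := lady f2 A1 A2 hf2 hf2s hA1.continuous hA2.continuous
  have hX1 : ∫⁻ p, ENNReal.ofReal (‖f1 p‖ ^ 2) ≤ lX := by
    rw [hlX]
    refine lintegral_mono fun p => ENNReal.ofReal_le_ofReal ?_
    unfold gradAsq
    exact le_add_of_nonneg_right (by positivity)
  have hX2 : ∫⁻ p, ENNReal.ofReal (‖f2 p‖ ^ 2) ≤ lX := by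
    rw [hlX]
    refine lintegral_mono fun p => ENNReal.ofReal_le_ofReal ?_
    unfold gradAsq
    exact le_add_of_nonneg_left (by positivity)
  have hY1 : ∫⁻ p, ENNReal.ofReal
      (‖covD1 A1 f1 p‖ ^ 2 + ‖covD2 A2 f1 p‖ ^ 2) ≤ lY := by
    rw [hlY]
    refine lintegral_mono fun p => ENNReal.ofReal_le_ofReal ?_
    unfold grad2Asq
    have h12 : 0 ≤ ‖covD1 A1 f2 p‖ ^ 2 := by positivity
    have h22 : 0 ≤ ‖covD2 A2 f2 p‖ ^ 2 := by positivity
    rw [hf1def]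
    linarith
  have hY2 : ∫⁻ p, ENNReal.ofReal
      (‖covD1 A1 f2 p‖ ^ 2 + ‖covD2 A2 f2 p‖ ^ 2) ≤ lY := by
    rw [hlY]
    refine lintegral_mono fun p => ENNReal.ofReal_le_ofReal ?_
    unfold grad2Asq
    have h11 : 0 ≤ ‖covD1 A1 f1 p‖ ^ 2 := by positivity
    have h21 : 0 ≤ ‖covD2 A2 f1 p‖ ^ 2 := by positivity
    rw [hf2def]
    linarith
  have hb1 : ∫⁻ p, ENNReal.ofReal (‖f1 p‖ ^ 2 * ‖f1 p‖ ^ 2)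
      ≤ 8 * (C : ℝ≥0∞) ^ 2 * lX * lY := by
    refine hl1.trans ?_
    gcongr
  have hb2 : ∫⁻ p, ENNReal.ofReal (‖f2 p‖ ^ 2 * ‖f2 p‖ ^ 2)
      ≤ 8 * (C : ℝ≥0∞) ^ 2 * lX * lY := by
    refine hl2.trans ?_
    gcongr
  -- assemble: lZ ≤ K * lX * lY
  have hcore : lZ ≤ K * lX * lY := by
    have hpt : ∀ p, ENNReal.ofReal ((gradAsq A1 A2 Φ p) ^ 2)
        ≤ 2 * ENNReal.ofReal (‖f1 p‖ ^ 2 * ‖f1 p‖ ^ 2)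
          + 2 * ENNReal.ofReal (‖f2 p‖ ^ 2 * ‖f2 p‖ ^ 2) := by
      intro p
      rw [show (2 : ℝ≥0∞) = ENNReal.ofReal (2 : ℝ) by norm_num,
        ← ENNReal.ofReal_mul (by norm_num), ← ENNReal.ofReal_mul (by norm_num),
        ← ENNReal.ofReal_add (by positivity) (by positivity)]
      apply ENNReal.ofReal_le_ofReal
      unfold gradAsq
      rw [hf1def, hf2def]
      nlinarith [sq_nonneg (‖covD1 A1 Φ p‖ ^ 2 - ‖covD2 A2 Φ p‖ ^ 2)]
    have hm1 : Measurable (fun p : ℝ × ℝ =>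
        ENNReal.ofReal (‖f1 p‖ ^ 2 * ‖f1 p‖ ^ 2)) :=
      (ENNReal.continuous_ofReal.comp (((continuous_norm.comp hf1c).pow 2).mul
        ((continuous_norm.comp hf1c).pow 2))).measurable
    have hm2 : Measurable (fun p : ℝ × ℝ =>
        ENNReal.ofReal (‖f2 p‖ ^ 2 * ‖f2 p‖ ^ 2)) :=
      (ENNReal.continuous_ofReal.comp (((continuous_norm.comp hf2c).pow 2).mul
        ((continuous_norm.comp hf2c).pow 2))).measurable
    have hmeas1 : Measurable (fun p =>
        2 * ENNReal.ofReal (‖f1 p‖ ^ 2 * ‖f1 p‖ ^ 2)) :=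
      hm1.const_mul 2
    calc lZ ≤ ∫⁻ p, (2 * ENNReal.ofReal (‖f1 p‖ ^ 2 * ‖f1 p‖ ^ 2)
          + 2 * ENNReal.ofReal (‖f2 p‖ ^ 2 * ‖f2 p‖ ^ 2)) := by
          rw [hlZ]; exact lintegral_mono hpt
      _ = (∫⁻ p, 2 * ENNReal.ofReal (‖f1 p‖ ^ 2 * ‖f1 p‖ ^ 2))
          + ∫⁻ p, 2 * ENNReal.ofReal (‖f2 p‖ ^ 2 * ‖f2 p‖ ^ 2) :=
          lintegral_add_left hmeas1 _
      _ = 2 * (∫⁻ p, ENNReal.ofReal (‖f1 p‖ ^ 2 * ‖f1 p‖ ^ 2))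
          + 2 * ∫⁻ p, ENNReal.ofReal (‖f2 p‖ ^ 2 * ‖f2 p‖ ^ 2) := by
          rw [lintegral_const_mul 2 hm1, lintegral_const_mul 2 hm2]
      _ ≤ 2 * (8 * (C : ℝ≥0∞) ^ 2 * lX * lY) + 2 * (8 * (C : ℝ≥0∞) ^ 2 * lX * lY) := by
          gcongr
      _ = K * lX * lY := by rw [hKdef]; ring
  -- pass to real numbers
  have hZreal : lZ.toReal ≤ K.toReal * lX.toReal * lY.toReal := by
    have hne : K * lX * lY ≠ ⊤ :=
      ENNReal.mul_ne_top (ENNReal.mul_ne_top hKne hXlt) hYlt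
    have := ENNReal.toReal_mono hne hcore
    rwa [ENNReal.toReal_mul, ENNReal.toReal_mul] at this
  rw [hXeq, hYeq, hZeq]
  set X : ℝ := lX.toReal with hXdef'
  set Y : ℝ := lY.toReal with hYdef'
  set Z : ℝ := lZ.toReal with hZdef'
  have hX0 : 0 ≤ X := ENNReal.toReal_nonneg
  have hY0 : 0 ≤ Y := ENNReal.toReal_nonneg
  have hZ0 : 0 ≤ Z := ENNReal.toReal_nonneg
  have hK0 : 0 ≤ K.toReal := ENNReal.toReal_nonneg
  have hZle : Z ≤ (K.toReal + 1) * (X * Y) := by nlinarith [mul_nonneg hX0 hY0]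
  have hmono := Real.rpow_le_rpow hZ0 hZle (by norm_num : (0 : ℝ) ≤ 1 / 4)
  rw [Real.mul_rpow (by positivity) (mul_nonneg hX0 hY0), Real.mul_rpow hX0 hY0] at hmono
  calc Z ^ ((1 : ℝ) / 4)
      ≤ (K.toReal + 1) ^ ((1 : ℝ) / 4) * (X ^ ((1 : ℝ) / 4) * Y ^ ((1 : ℝ) / 4)) := hmono
    _ = (K.toReal + 1) ^ ((1 : ℝ) / 4) * X ^ ((1 : ℝ) / 4) * Y ^ ((1 : ℝ) / 4) := by ring
    _ ≤ (K.toReal + 1) ^ ((1 : ℝ) / 4) * X ^ ((1 : ℝ) / 4)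
        * (X ^ ((1 : ℝ) / 4) + Y ^ ((1 : ℝ) / 4)) := by
        have hc : (0 : ℝ) ≤ (K.toReal + 1) ^ ((1 : ℝ) / 4) * X ^ ((1 : ℝ) / 4) := by positivity
        have hy : Y ^ ((1 : ℝ) / 4) ≤ X ^ ((1 : ℝ) / 4) + Y ^ ((1 : ℝ) / 4) :=
          le_add_of_nonneg_left (Real.rpow_nonneg hX0 _)
        exact mul_le_mul_of_nonneg_left hy hc
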